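/- Let p be a prime and G a finite group with Sylow p-subgroup P, and suppose J = J(P) (the Thompson subgroup of P) is elementary abelian. If J is not contained in the derived subgroup of N_G(J), then J is not contained in the derived subgroup of G. -/

import Mathlib

/-- The subgroup `A` is abelian (as a set of elements of `G`). -/
def IsCommSub {G : Type*} [Group G] (A : Subgroup G) : Prop :=
  ∀ x ∈ A, ∀ y ∈ A, x * y = y * x

/-- The Thompson subgroup `J(P)`: the subgroup generated by the abelian subgroups
of `P` of maximal order. -/
def ThompsonSubgroup {G : Type*} [Group G] (P : Subgroup G) : Subgroup G :=
  ⨆ A ∈ {A : Subgroup G | A ≤ P ∧ IsCommSub A ∧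
    ∀ B : Subgroup G, B ≤ P → IsCommSub B → Nat.card B ≤ Nat.card A}, A

/-!
Let `N = N_G(J)` and let `V : G → N/N'` be the transfer. A conjugate of `J` lying in `P` is again
an abelian subgroup of `P` of maximal order, so it equals `J`; with Sylow's theorem inside `N` this
shows that `J^g ≤ N` forces `g ∈ N`, i.e. `N` is the only coset of `N` fixed by `J`.
Now take `x ∈ J`. As `x^p = 1`, the `x`-cycles on `G/N` have length `1` or `p`, and only the
cosets `gN` fixed by `x` contribute, each by `g⁻¹xg N'`. Since `J` is abelian these contributions
are constant on `J`-orbits; they have exponent `p`, and every `J`-orbit other than `{N}` has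
length divisible by `p`. Hence `V(x) = xN'`, so `J ≤ G' ≤ ker V` would force `J ≤ N'`.
-/

open MulAction

namespace MulAction

theorem period_smul_of_commute {G α : Type*} [Group G] [MulAction G α] {x u : G}
    (hu : Commute u x) (a : α) : period x (u • a) = period x a := by
  simp only [period_eq_minimalPeriod, Function.minimalPeriod_eq_minimalPeriod_iff,
    isPeriodicPt_smul_iff]
  intro n
  rw [smul_smul, ← (hu.pow_right n).eq, mul_smul, smul_left_cancel_iff]

variable {K α M : Type*} [Group K] [MulAction K α] [Fintype α] [CommMonoid M]

theorem prod_eq_prod_orbitRel_pow_card [Fintype (orbitRel.Quotient K α)] {f : α → M}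
    (hf : ∀ (k : K) (a : α), f (k • a) = f a) :
    ∏ a, f a = ∏ ω : orbitRel.Quotient K α, f ω.out ^ Nat.card (orbit K ω.out) := by
  classical
  rw [← (selfEquivSigmaOrbits K α).symm.prod_comp, Fintype.prod_sigma]
  refine Fintype.prod_congr _ _ fun ω => ?_
  rw [Nat.card_eq_fintype_card, ← Finset.card_univ, ← Finset.prod_const]
  refine Fintype.prod_congr _ _ fun ⟨b, k, hk⟩ => ?_
  change f b = _
  rw [← hk, hf]

end MulAction

theorem IsPGroup.prod_eq_of_fixedPoints_eq_singleton {p : ℕ} [Fact p.Prime]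
    {K α M : Type*} [Group K] [MulAction K α] [Fintype α] [CommMonoid M]
    (hK : IsPGroup p K) {f : α → M} (hf : ∀ (k : K) (a : α), f (k • a) = f a)
    (hfp : ∀ a, f a ^ p = 1) {a₀ : α} (ha₀ : fixedPoints K α = {a₀}) :
    ∏ a, f a = f a₀ := by
  classical
  have hfix (a : α) (ha : Nat.card (orbit K a) = 1) : a = a₀ := by
    rwa [Nat.card_eq_fintype_card, ← mem_fixedPoints_iff_card_orbit_eq_one, ha₀] at ha
  have ha₀fix : a₀ ∈ fixedPoints K α := ha₀ ▸ Set.mem_singleton a₀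
  have hout : (⟦a₀⟧ : orbitRel.Quotient K α).out = a₀ := by
    obtain ⟨k, hk⟩ := Quotient.mk_out (s := orbitRel K α) a₀
    exact hk ▸ ha₀fix k
  rw [prod_eq_prod_orbitRel_pow_card hf, Fintype.prod_eq_single ⟦a₀⟧ fun ω hω => ?_]
  · rw [hout, Nat.card_eq_fintype_card, mem_fixedPoints_iff_card_orbit_eq_one.mp ha₀fix, pow_one]
  · obtain ⟨n, hn⟩ := hK.card_orbit ω.out
    rcases n with _ | n
    · refine absurd ?_ hω
      rw [← hfix _ hn]
      exact ω.out_eq.symm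
    · rw [hn, pow_succ', pow_mul, hfp, one_pow]

namespace MonoidHom

open Subgroup

variable {G A : Type*} [Group G] [CommGroup A] {H : Subgroup G} (ϕ : H →* A)

theorem apply_conj_eq_of_mk_eq {g g' y : G} (hg : (g : G ⧸ H) = g') (hy : g⁻¹ * y * g ∈ H)
    (hy' : g'⁻¹ * y * g' ∈ H) : ϕ ⟨g'⁻¹ * y * g', hy'⟩ = ϕ ⟨g⁻¹ * y * g, hy⟩ := by
  have hk : g⁻¹ * g' ∈ H := QuotientGroup.eq.mp hg
  have : (⟨g'⁻¹ * y * g', hy'⟩ : H) = ⟨g⁻¹ * g', hk⟩⁻¹ * ⟨g⁻¹ * y * g, hy⟩ * ⟨g⁻¹ * g', hk⟩ :=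
    Subtype.ext (by simp only [coe_mul, coe_inv]; group)
  rw [this, map_mul, map_mul, map_inv, mul_right_comm, inv_mul_cancel, one_mul]

/-- `transfer ϕ x` is the product over the `x`-cycles on `G ⧸ H` of `ϕ (q⁻¹ x^m q)`, where `m` is
the length of the cycle through `q`; this is that factor, attached to every point of the cycle. -/
noncomputable def transferFactor (x : G) (q : G ⧸ H) : A :=
  ϕ ⟨q.out⁻¹ * x ^ period x q * q.out, QuotientGroup.out_conj_pow_minimalPeriod_mem H x q⟩

theorem transferFactor_smul_of_commute {x u : G} (hu : Commute u x) (q : G ⧸ H) :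
    ϕ.transferFactor x (u • q) = ϕ.transferFactor x q := by
  have hmk : ((u * q.out : G) : G ⧸ H) = (u • q).out := by
    rw [QuotientGroup.out_eq', ← smul_eq_mul, MulAction.Quotient.mk_smul_out]
  set m := period x q
  have hm : period x (u • q) = m := period_smul_of_commute hu q
  have hconj : (u * q.out)⁻¹ * x ^ m * (u * q.out) = q.out⁻¹ * x ^ m * q.out := by
    have h : u⁻¹ * x ^ m * u = x ^ m := by
      rw [mul_assoc, ← (hu.pow_right m).eq, inv_mul_cancel_left]
    calc (u * q.out)⁻¹ * x ^ m * (u * q.out) = q.out⁻¹ * (u⁻¹ * x ^ m * u) * q.out := by group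
      _ = q.out⁻¹ * x ^ m * q.out := by rw [h]
  have hmem : (u * q.out)⁻¹ * x ^ period x (u • q) * (u * q.out) ∈ H := by
    rw [hm, hconj]
    exact QuotientGroup.out_conj_pow_minimalPeriod_mem H x q
  refine (apply_conj_eq_of_mk_eq ϕ hmk hmem _).trans ?_
  exact congrArg ϕ (Subtype.ext (by dsimp only; rw [hm, hconj]))

theorem transferFactor_pow_eq_one {x : G} {n : ℕ} (hx : x ^ n = 1) (q : G ⧸ H) :
    ϕ.transferFactor x q ^ n = 1 := by
  rw [transferFactor, ← map_pow, ← map_one ϕ]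
  congr 1
  ext
  have h := conj_pow (a := q.out⁻¹) (b := x ^ period x q) (i := n)
  rw [inv_inv] at h
  rw [SubgroupClass.coe_pow, h, ← pow_mul, mul_comm, pow_mul, hx, one_pow, mul_one,
    inv_mul_cancel, OneMemClass.coe_one]

theorem transferFactor_mk_one {x : G} (hx : x ∈ H) :
    ϕ.transferFactor x ((1 : G) : G ⧸ H) = ϕ ⟨x, hx⟩ := by
  have hfix : period x ((1 : G) : G ⧸ H) = 1 := by
    rw [period_eq_one_iff, MulAction.Quotient.smul_mk, QuotientGroup.eq]
    simpa using inv_mem hx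
  have hy : (1 : G)⁻¹ * x * 1 ∈ H := by simpa using hx
  simp only [transferFactor, hfix, pow_one]
  rw [apply_conj_eq_of_mk_eq ϕ (QuotientGroup.out_eq' _).symm hy]
  exact congrArg ϕ (Subtype.ext (by simp))

theorem transfer_eq_prod_transferFactor [H.FiniteIndex] [Fintype (G ⧸ H)] {p : ℕ}
    [Fact p.Prime] {x : G} (hx : x ^ p = 1) : ϕ.transfer x = ∏ q, ϕ.transferFactor x q := by
  classical
  have hcomm (k : zpowers x) : Commute (k : G) x := by
    obtain ⟨n, hn⟩ := k.2
    exact hn ▸ (Commute.refl x).zpow_left n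
  rw [transfer_eq_prod_quotient_orbitRel_zpowers_quot, prod_eq_prod_orbitRel_pow_card
    (K := zpowers x) fun k => ϕ.transferFactor_smul_of_commute (u := k) (hcomm k)]
  refine Fintype.prod_congr _ _ fun ω => ?_
  change ϕ.transferFactor x ω.out = _
  have hcard : Nat.card (orbit (zpowers x) ω.out) = period x ω.out :=
    Fintype.card_eq_nat_card.symm.trans (minimalPeriod_eq_card x ω.out).symm
  have hdvd : period x ω.out ∣ p :=
    (period_dvd_orderOf x _).trans (orderOf_dvd_of_pow_eq_one hx)
  rw [hcard]
  rcases (Nat.dvd_prime Fact.out).1 hdvd with h | h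
  · rw [h, pow_one]
  · have : ϕ.transferFactor x ω.out = 1 := by
      rw [transferFactor, ← map_one ϕ]
      congr 1
      ext
      simp [h, hx]
    rw [this, one_pow]

theorem transfer_eq_of_fixedPoints_eq_singleton [H.FiniteIndex] [Fintype (G ⧸ H)] {p : ℕ}
    [Fact p.Prime] {J : Subgroup G} (hJ : IsPGroup p J)
    (hfix : fixedPoints J (G ⧸ H) = {((1 : G) : G ⧸ H)}) {x : G} (hxH : x ∈ H)
    (hxJ : x ∈ centralizer J) (hx : x ^ p = 1) :
    ϕ.transfer x = ϕ ⟨x, hxH⟩ := by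
  rw [transfer_eq_prod_transferFactor ϕ hx,
    hJ.prod_eq_of_fixedPoints_eq_singleton
      (fun u => ϕ.transferFactor_smul_of_commute (u := u) (mem_centralizer_iff.1 hxJ u u.2))
      (ϕ.transferFactor_pow_eq_one hx) hfix,
    transferFactor_mk_one]

end MonoidHom

namespace Subgroup

variable {G : Type*} [Group G]

theorem map_conj_map_conj (J : Subgroup G) (g h : G) :
    (J.map (MulAut.conj h : G →* G)).map (MulAut.conj g : G →* G) =
      J.map (MulAut.conj (g * h) : G →* G) := by
  rw [map_map, map_mul]
  rfl

theorem map_conj_le_of_mem {J P : Subgroup G} (hJP : J ≤ P) {u : G} (hu : u ∈ P) :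
    J.map (MulAut.conj u : G →* G) ≤ P := by
  rintro - ⟨a, ha, rfl⟩
  exact mul_mem (mul_mem hu (hJP ha)) (inv_mem hu)

theorem fixedPoints_quotient_eq_singleton_one {H J : Subgroup G} (hJH : J ≤ H)
    (hJ : ∀ g : G, J.map (MulAut.conj g : G →* G) ≤ H → g ∈ H) :
    fixedPoints J (G ⧸ H) = {((1 : G) : G ⧸ H)} := by
  ext q
  induction q using QuotientGroup.induction_on with | H g => ?_
  have hsmul (u : G) : u • (g : G ⧸ H) = g ↔ (MulAut.conj g⁻¹ : G →* G) u ∈ H := by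
    rw [MulAction.Quotient.smul_coe, eq_comm, QuotientGroup.eq]
    simp [mul_assoc]
  have hfix : (g : G ⧸ H) ∈ fixedPoints J (G ⧸ H) ↔ J.map (MulAut.conj g⁻¹ : G →* G) ≤ H := by
    rw [map_le_iff_le_comap, SetLike.le_def]
    simp only [mem_fixedPoints, Subtype.forall, mem_comap]
    exact forall₂_congr fun u _ => hsmul u
  rw [hfix, Set.mem_singleton_iff, QuotientGroup.eq, mul_one, inv_mem_iff]
  exact ⟨fun h => inv_mem_iff.1 (hJ _ h), fun hg => map_conj_le_of_mem hJH (inv_mem hg)⟩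

end Subgroup

namespace Sylow

variable {p : ℕ} [Fact p.Prime] {G : Type*} [Group G] [Finite (Sylow p G)]

theorem exists_map_conj_le (P : Sylow p G) {N Q : Subgroup G} (hPN : (P : Subgroup G) ≤ N)
    (hQ : IsPGroup p Q) (hQN : Q ≤ N) : ∃ n ∈ N, Q.map (MulAut.conj n : G →* G) ≤ P := by
  obtain ⟨R, hR⟩ := (hQ.comap_subtype (K := N)).exists_le_sylow
  obtain ⟨n, hn⟩ := MulAction.exists_smul_eq N R (P.subtype hPN)
  refine ⟨n, n.2, ?_⟩
  rintro - ⟨y, hy, rfl⟩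
  have : (MulAut.conj n) ⟨y, hQN hy⟩ ∈ ((n • R : Sylow p N) : Subgroup N) := by
    rw [coe_subgroup_smul]
    exact Subgroup.smul_mem_pointwise_smul _ _ _ (hR hy)
  rwa [hn, coe_subtype, Subgroup.mem_subgroupOf] at this

theorem mem_normalizer_of_map_conj_le_normalizer (P : Sylow p G) {J : Subgroup G}
    (hJP : J ≤ P)
    (hJ : ∀ g : G, J.map (MulAut.conj g : G →* G) ≤ P → J.map (MulAut.conj g : G →* G) = J)
    {g : G} (hg : J.map (MulAut.conj g : G →* G) ≤ Subgroup.normalizer (J : Set G)) :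
    g ∈ Subgroup.normalizer (J : Set G) := by
  have hPN : (P : Subgroup G) ≤ Subgroup.normalizer (J : Set G) := fun u hu =>
    Subgroup.mem_normalizer_iff_map_conj_eq.2 (hJ u (Subgroup.map_conj_le_of_mem hJP hu))
  obtain ⟨n, hn, hle⟩ :=
    P.exists_map_conj_le hPN ((P.2.to_le hJP).map (MulAut.conj g : G →* G)) hg
  rw [Subgroup.map_conj_map_conj] at hle
  have hng : n * g ∈ Subgroup.normalizer (J : Set G) :=
    Subgroup.mem_normalizer_iff_map_conj_eq.2 (hJ _ hle)
  simpa using mul_mem (inv_mem hn) hng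

end Sylow

section Thompson

variable {G : Type*} [Group G]

theorem IsCommSub.map {G' : Type*} [Group G'] {A : Subgroup G} (hA : IsCommSub A)
    (f : G →* G') : IsCommSub (A.map f) := by
  rintro - ⟨a, ha, rfl⟩ - ⟨b, hb, rfl⟩
  rw [← map_mul, ← map_mul, hA a ha b hb]

theorem le_thompsonSubgroup {P A : Subgroup G} (hAP : A ≤ P) (hA : IsCommSub A)
    (hmax : ∀ B : Subgroup G, B ≤ P → IsCommSub B → Nat.card B ≤ Nat.card A) :
    A ≤ ThompsonSubgroup P :=
  le_iSup₂_of_le (f := fun A (_ : A ∈ {A : Subgroup G | A ≤ P ∧ IsCommSub A ∧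
    ∀ B : Subgroup G, B ≤ P → IsCommSub B → Nat.card B ≤ Nat.card A}) => A) A
    ⟨hAP, hA, hmax⟩ le_rfl

theorem thompsonSubgroup_le (P : Subgroup G) : ThompsonSubgroup P ≤ P :=
  iSup₂_le fun _ hA => hA.1

theorem thompsonSubgroup_map_conj_eq [Finite G] {P : Subgroup G} {g : G}
    (h : (ThompsonSubgroup P).map (MulAut.conj g : G →* G) ≤ P) :
    (ThompsonSubgroup P).map (MulAut.conj g : G →* G) = ThompsonSubgroup P := by
  have hcard (A : Subgroup G) : Nat.card (A.map (MulAut.conj g : G →* G)) = Nat.card A :=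
    Subgroup.card_map_of_injective (MulAut.conj g).injective
  refine Subgroup.eq_of_le_of_card_ge ?_ (hcard _).ge
  rw [Subgroup.map_le_iff_le_comap]
  refine iSup₂_le fun A ⟨hAP, hA, hmax⟩ => Subgroup.map_le_iff_le_comap.1 ?_
  refine le_thompsonSubgroup ?_ (hA.map _) fun B hBP hB => (hcard A).symm ▸ hmax B hBP hB
  exact (Subgroup.map_mono (le_iSup₂_of_le A ⟨hAP, hA, hmax⟩ le_rfl)).trans h

end Thompson

theorem stmt_17 {G : Type*} [Group G] [Finite G] {p : ℕ} [Fact p.Prime]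
    (P : Sylow p G)
    (hJab : IsCommSub (ThompsonSubgroup (P : Subgroup G)))
    (hJexp : ∀ x ∈ ThompsonSubgroup (P : Subgroup G), x ^ p = 1)
    (hnotN : ¬ ThompsonSubgroup (P : Subgroup G) ≤
      ⁅Subgroup.normalizer (ThompsonSubgroup (P : Subgroup G) : Set G),
        Subgroup.normalizer (ThompsonSubgroup (P : Subgroup G) : Set G)⁆) :
    ¬ ThompsonSubgroup (P : Subgroup G) ≤ commutator G := by
  set J := ThompsonSubgroup (P : Subgroup G)
  set N := Subgroup.normalizer (J : Set G)
  have := Fintype.ofFinite (G ⧸ N)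
  have hJP : J ≤ P := thompsonSubgroup_le _
  have hfix : fixedPoints J (G ⧸ N) = {((1 : G) : G ⧸ N)} :=
    Subgroup.fixedPoints_quotient_eq_singleton_one Subgroup.le_normalizer fun _ =>
      P.mem_normalizer_of_map_conj_le_normalizer hJP fun _ => thompsonSubgroup_map_conj_eq
  intro hJG
  refine hnotN fun x hx => ?_
  have htr := (Abelianization.of : N →* _).transfer_eq_of_fixedPoints_eq_singleton
    (P.2.to_le hJP) hfix (Subgroup.le_normalizer hx)
    (Subgroup.mem_centralizer_iff.2 fun u hu => hJab u hu x hx) (hJexp x hx)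
  have hx' : Abelianization.of (⟨x, Subgroup.le_normalizer hx⟩ : N) = 1 :=
    htr ▸ Abelianization.commutator_subset_ker (Abelianization.of : N →* _).transfer (hJG hx)
  rw [← Subgroup.map_subtype_commutator, ← Abelianization.ker_of]
  exact ⟨_, hx', rfl⟩
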